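/- arXiv:1603.07958 — 2 statements merged into one kernel-verified Lean document; each statement's English description precedes it below -/
import Mathlib

section
/- Let $V$ be a vertex algebra and $M$ a $V$-module. Then any $V$-module satisfies weak commutativity (locality): for all $a, b \in V$ there exists $k \in \mathbb{N}$ such that $(x-y)^k\, a\,{}_x\,(b\,{}_y\, u) = (x-y)^k\, b\,{}_y\,(a\,{}_x\, u)$ for all $u \in M$. -/
/- Coefficient-wise formalization of vertex algebras:
a series `w ∈ V((z))` is encoded by its coefficient function `ℤ → V`
(the value at `n` being the coefficient of `z^n`), and a field/product
`a ⊗ b ↦ a_z b ∈ V((z))` by a map `V → V → ℤ → V`. -/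

namespace VertexCohomology

open scoped BigOperators

section Defs

variable (𝕜 : Type*) [Field 𝕜] [CharZero 𝕜]
variable {V W M : Type*} [AddCommGroup V] [Module 𝕜 V] [AddCommGroup M] [Module 𝕜 M]

/-- Coefficient of `z^n` in `e^{z d} w(z)`, where `w` is a series with coefficients `w n`. -/
noncomputable def ezd (d : M →ₗ[𝕜] M) (w : ℤ → M) : ℤ → M :=
  fun n => ∑ᶠ k : ℕ, ((k.factorial : 𝕜)⁻¹) • (d ^ k) (w (n - (k : ℤ)))

/-- Coefficient of `z^n` in `w(-z)`. -/
def negz (w : ℤ → M) : ℤ → M := fun n => ((n.negOnePow : ℤ)) • w n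

/-- Coefficient of `z^n` in `(d/dz) w(z)`. -/
def derivz (w : ℤ → M) : ℤ → M := fun n => (n + 1) • w (n + 1)

/-- The constant series with value `a`. -/
def unitSeries (a : M) : ℤ → M := fun n => if n = 0 then a else 0

/-- Coefficient of `z^m w^n` in `(z+w)^l · F(z,w)`, where `F m n` is the coefficient
of `z^m w^n` of a formal series in two variables. -/
def mulZW (l : ℕ) (F : ℤ → ℤ → M) : ℤ → ℤ → M :=
  fun m n => ∑ k ∈ Finset.range (l + 1), (l.choose k : ℤ) • F (m - ((l - k : ℕ) : ℤ)) (n - (k : ℤ))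

/-- Coefficient of `x^m y^n` in `(x-y)^l · F(x,y)`. -/
def mulZmW (l : ℕ) (F : ℤ → ℤ → M) : ℤ → ℤ → M :=
  fun m n => ∑ k ∈ Finset.range (l + 1),
    ((-1 : ℤ) ^ k * (l.choose k : ℤ)) • F (m - ((l - k : ℕ) : ℤ)) (n - (k : ℤ))

/-- Coefficient of `z^m w^n` in `F(a, ·)_{z+w}` applied to the series `u` in the
variable `w`; here `(z+w)^j` is expanded in nonnegative powers of `w`:
`(z+w)^j = ∑_{i ≥ 0} C(j,i) z^{j-i} w^i`. -/
noncomputable def shiftComp (F : V → W → ℤ → M) (a : V) (u : ℤ → W) : ℤ → ℤ → M :=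
  fun m n => ∑ᶠ i : ℕ, (Ring.choose (m + (i : ℤ)) i) • F a (u (n - (i : ℤ))) (m + (i : ℤ))

/-- The axioms of a vertex algebra, stated coefficient-wise:
`Y a b n` is the coefficient of `z^n` in `a_z b`. -/
structure IsVertexAlg (Y : V → V → ℤ → V) (one : V) (D : V →ₗ[𝕜] V) : Prop where
  linear_left : ∀ (b : V) (n : ℤ), IsLinearMap 𝕜 (fun a => Y a b n)
  linear_right : ∀ (a : V) (n : ℤ), IsLinearMap 𝕜 (fun b => Y a b n)
  trunc : ∀ a b, ∃ N : ℤ, ∀ n < N, Y a b n = 0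
  unit_left : ∀ a, Y one a = unitSeries a
  unit_right : ∀ a, Y a one = ezd 𝕜 D (unitSeries a)
  transl : ∀ a b, Y (D a) b = derivz (Y a b)
  derivation : ∀ a b n, D (Y a b n) = Y (D a) b n + Y a (D b) n
  comm : ∀ a b, Y a b = ezd 𝕜 D (negz (Y b a))
  assoc : ∀ a b c, ∃ l : ℕ,
    mulZW l (fun m n => Y (Y a b m) c n) = mulZW l (shiftComp Y a (Y b c))

/-- The axioms of a module over a vertex algebra, stated coefficient-wise. -/
structure IsVModule (Y : V → V → ℤ → V) (one : V) (D : V →ₗ[𝕜] V)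
    (YM : V → M → ℤ → M) (d : M →ₗ[𝕜] M) : Prop where
  linear_left : ∀ (u : M) (n : ℤ), IsLinearMap 𝕜 (fun a => YM a u n)
  linear_right : ∀ (a : V) (n : ℤ), IsLinearMap 𝕜 (fun u => YM a u n)
  trunc : ∀ a u, ∃ N : ℤ, ∀ n < N, YM a u n = 0
  unit : ∀ u, YM one u = unitSeries u
  transl : ∀ a u, YM (D a) u = derivz (YM a u)
  derivation : ∀ a u n, d (YM a u n) = YM (D a) u n + YM a (d u) n
  assoc : ∀ a b u, ∃ l : ℕ,
    mulZW l (fun m n => YM (Y a b m) u n) = mulZW l (shiftComp YM a (YM b u))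

/-- The right action `u_z a := e^{z d}(a_{-z} u)` of `V` on `M`. -/
noncomputable def rAct (YM : V → M → ℤ → M) (d : M →ₗ[𝕜] M) (u : M) (a : V) : ℤ → M :=
  ezd 𝕜 d (negz (YM a u))

/-- `(δ₁ g)_z (a,b) = a_z g(b) - g(a_z b) + g(a)_z b`. -/
noncomputable def delta1 (Y : V → V → ℤ → V) (YM : V → M → ℤ → M) (d : M →ₗ[𝕜] M)
    (g : V → M) (a b : V) : ℤ → M :=
  fun n => YM a (g b) n - g (Y a b n) + rAct 𝕜 YM d (g a) b n

/-- Membership in `C²(V,M)`. -/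
structure IsC2 (one : V) (D : V →ₗ[𝕜] V) (d : M →ₗ[𝕜] M) (f : V → V → ℤ → M) : Prop where
  linear_left : ∀ (b : V) (n : ℤ), IsLinearMap 𝕜 (fun a => f a b n)
  linear_right : ∀ (a : V) (n : ℤ), IsLinearMap 𝕜 (fun b => f a b n)
  trunc : ∀ a b, ∃ N : ℤ, ∀ n < N, f a b n = 0
  unit_right : ∀ a, f a one = 0
  unit_left : ∀ b, f one b = 0
  transl : ∀ a b, derivz (f a b) = f (D a) b
  derivation : ∀ a b n, d (f a b n) = f (D a) b n + f a (D b) n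
  symm : ∀ a b, f a b = ezd 𝕜 d (negz (f b a))

/-- The 2-cocycle condition: for all `a,b,c` there is `N` with
`(x+z)^N [f_z(a_x b, c) + f_x(a,b)_z c] = (x+z)^N [a_{x+z} f_z(b,c) + f_{x+z}(a, b_z c)]`,
coefficients taken at `x^m z^n`, `(x+z)^j` expanded in nonnegative powers of `z`. -/
def Cocycle (Y : V → V → ℤ → V) (YM : V → M → ℤ → M) (d : M →ₗ[𝕜] M)
    (f : V → V → ℤ → M) : Prop :=
  ∀ a b c : V, ∃ N : ℕ,
    mulZW N (fun m n => f (Y a b m) c n + rAct 𝕜 YM d (f a b m) c n)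
      = mulZW N (fun m n => shiftComp YM a (f b c) m n + shiftComp f a (Y b c) m n)

/-- The square-zero extension product on `V ⊕ M`:
`(a,u)_z (b,v) = (a_z b, a_z v + u_z b + ψ_z(a,b))`. -/
noncomputable def extY (Y : V → V → ℤ → V) (YM : V → M → ℤ → M) (d : M →ₗ[𝕜] M)
    (ψ : V → V → ℤ → M) : V × M → V × M → ℤ → V × M :=
  fun p q n => (Y p.1 q.1 n, YM p.1 q.2 n + rAct 𝕜 YM d p.2 q.1 n + ψ p.1 q.1 n)

/-- The first-order deformed product on `V[t]/(t²) ≃ V × V` (first component the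
constant term, second the coefficient of `t`): `a_z^t b = a_z b + t f_z(a,b)`. -/
def defY (Y : V → V → ℤ → V) (f : V → V → ℤ → V) : V × V → V × V → ℤ → V × V :=
  fun p q n => (Y p.1 q.1 n, Y p.1 q.2 n + Y p.2 q.1 n + f p.1 q.1 n)

end Defs

/-! Put `F(x, y) = (a_x b)_y u`, `A(x, y) = a_x b_y u` and `B(x, y) = b_x a_y u`. Associativity
gives `(x+y)^l F(x, y) = (x+y)^l A(x+y, y)`; skew-symmetry and `Y(Dc, z) = ∂_z Y(c, z)` turn
`(b_x a)_y u` into `F(-x, y+x)`, so associativity for `(b, a)` gives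
`(x+y)^l F(-x, y+x) = (x+y)^l B(x+y, y)`. Choose `k` with `x^k a_x b` free of negative powers and
put `H(x, y) = x^k y^l (x+y)^l F(x, y)`. Expanding `H(x - y, y)` gives `(x-y)^k x^l y^l A(x, y)`,
while expanding `H(-z, w+z)` and then substituting `z = x - y`, `w = y` gives
`(y-x)^k x^l y^l B(x, y)`, a formal version of `H(y - x, x)`. In each homogeneous degree `H` is a
polynomial in `x` and `H(-z, w+z)` a polynomial in `z`, so both expansions come from the same
Laurent polynomial, and exchanging `x` and `y` gives `(x-y)^k A(x, y) = (x-y)^k B(y, x)`. -/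

open Finset Polynomial

section Coefficients

/-- The coefficient of `x^m y^i` in `(x - y)^(m + i)`. -/
def subCoeff (m : ℤ) (i : ℕ) : ℤ := (-1) ^ i * Ring.choose (m + i) i

/-- The coefficient of `z^p w^q` in `(-z)^(p - j) (w + z)^(q + j)`. -/
def negAddCoeff (p q : ℤ) (j : ℕ) : ℤ := (p - j).negOnePow * Ring.choose (q + j) j

@[simp] lemma subCoeff_zero (m : ℤ) : subCoeff m 0 = 1 := by
  simp [subCoeff]

@[simp] lemma negAddCoeff_zero (p q : ℤ) : negAddCoeff p q 0 = p.negOnePow := by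
  simp [negAddCoeff]

lemma subCoeff_sub_one_succ (m : ℤ) (k : ℕ) :
    subCoeff (m - 1) (k + 1) = subCoeff m (k + 1) + subCoeff m k := by
  have h := Ring.choose_succ_succ (m + k) k
  simp only [subCoeff, Nat.cast_succ, pow_succ] at h ⊢
  rw [show m - 1 + (k + 1) = m + k by ring, show m + (k + 1) = m + k + 1 by ring, h]
  ring

lemma negAddCoeff_sub_one_left (p q : ℤ) (j : ℕ) :
    negAddCoeff (p - 1) q j = -negAddCoeff p q j := by
  simp only [negAddCoeff, show p - 1 - j = p - j - 1 by ring, Int.negOnePow_sub, Int.negOnePow_one]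
  push_cast
  ring

lemma negAddCoeff_sub_one_succ (p q : ℤ) (k : ℕ) :
    negAddCoeff p (q - 1) (k + 1) = negAddCoeff p q (k + 1) + negAddCoeff p q k := by
  have h := Ring.choose_succ_succ (q + k) k
  simp only [negAddCoeff, Nat.cast_succ] at h ⊢
  rw [show q - 1 + (k + 1) = q + k by ring, show q + (k + 1) = q + k + 1 by ring, h,
    show p - (k + 1) = p - k - 1 by ring, Int.negOnePow_sub, Int.negOnePow_one]
  push_cast
  ring

/-- The coefficients of `(x - y)^j` and `(x + y)^j` are inverse to each other. -/
lemma sum_subCoeff_mul_choose (m : ℤ) (s : ℕ) :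
    ∑ i ∈ range (s + 1), subCoeff m i * Ring.choose (m + s) (s - i) = if s = 0 then 1 else 0 := by
  have hneg (i : ℕ) : subCoeff m i = Ring.choose (-1 - m) i := by
    rw [show -1 - m = -(m + 1) by ring, Ring.choose_neg, subCoeff,
      show m + 1 + i - 1 = m + i by ring, Units.smul_def, Int.coe_negOnePow_natCast, smul_eq_mul]
  simp_rw [hneg]
  rw [← Finset.Nat.sum_antidiagonal_eq_sum_range_succ
      (fun i j => Ring.choose (-1 - m) i * Ring.choose (m + s) j),
    ← Ring.add_choose_eq s (Commute.all _ _), show -1 - m + (m + s) = s - 1 by ring]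
  rcases s with _ | s
  · simp
  · rw [show ((s + 1 : ℕ) : ℤ) - 1 = (s : ℕ) by push_cast; ring, Ring.choose_natCast,
      Nat.choose_succ_self]
    simp

end Coefficients

section Series

variable {M : Type*} [AddCommGroup M]

/-- Coefficient of `x^m y^n` in `F(x - y, y)`, powers of `x - y` expanded in nonnegative powers
of `y`. -/
noncomputable def substSub (F : ℤ → ℤ → M) (m n : ℤ) : M :=
  ∑ᶠ i : ℕ, subCoeff m i • F (m + i) (n - i)

/-- Coefficient of `x^m y^n` in `G(x + y, y)`, powers of `x + y` expanded in nonnegative powers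
of `y`. -/
noncomputable def substAdd (G : ℤ → ℤ → M) (m n : ℤ) : M :=
  ∑ᶠ i : ℕ, Ring.choose (m + i) i • G (m + i) (n - i)

/-- Coefficient of `z^p w^q` in `F(-z, w + z)`, powers of `w + z` expanded in nonnegative powers
of `z`. -/
noncomputable def substNegAdd (F : ℤ → ℤ → M) (p q : ℤ) : M :=
  ∑ᶠ j : ℕ, negAddCoeff p q j • F (p - j) (q + j)

def VanishesBelowFst (N : ℤ) (F : ℤ → ℤ → M) : Prop := ∀ p q, p < N → F p q = 0

def VanishesBelowSnd (N : ℤ) (F : ℤ → ℤ → M) : Prop := ∀ p q, q < N → F p q = 0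

lemma shiftComp_eq_substAdd {V W : Type*} [AddCommGroup W] (F : V → W → ℤ → M) (a : V)
    (u : ℤ → W) : shiftComp F a u = substAdd (fun x y => F a (u y) x) := rfl

lemma finsum_eq_sum_range_of_eq_zero (f : ℕ → M) (I : ℕ) (h : ∀ i, I ≤ i → f i = 0) :
    ∑ᶠ i, f i = ∑ i ∈ range I, f i :=
  finsum_eq_sum_of_support_subset f fun i hi => by
    simpa using not_le.mp fun hI => hi (h i hI)

lemma substSub_eq_sum {F : ℤ → ℤ → M} {N : ℤ} (hF : VanishesBelowSnd N F) (m n : ℤ) {I : ℕ}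
    (hI : n - N < I) : substSub F m n = ∑ i ∈ range I, subCoeff m i • F (m + i) (n - i) :=
  finsum_eq_sum_range_of_eq_zero _ I fun i hi => by rw [hF _ _ (by omega), smul_zero]

lemma substAdd_eq_sum {G : ℤ → ℤ → M} {N : ℤ} (hG : VanishesBelowSnd N G) (m n : ℤ) {I : ℕ}
    (hI : n - N < I) : substAdd G m n = ∑ i ∈ range I, Ring.choose (m + i) i • G (m + i) (n - i) :=
  finsum_eq_sum_range_of_eq_zero _ I fun i hi => by rw [hG _ _ (by omega), smul_zero]

lemma substNegAdd_eq_sum {F : ℤ → ℤ → M} {N : ℤ} (hF : VanishesBelowFst N F) (p q : ℤ) {J : ℕ}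
    (hJ : p - N < J) : substNegAdd F p q = ∑ j ∈ range J, negAddCoeff p q j • F (p - j) (q + j) :=
  finsum_eq_sum_range_of_eq_zero _ J fun j hj => by rw [hF _ _ (by omega), smul_zero]

lemma VanishesBelowSnd.substAdd {G : ℤ → ℤ → M} {N : ℤ} (hG : VanishesBelowSnd N G) :
    VanishesBelowSnd N (substAdd G) := fun p q hq => by
  rw [substAdd_eq_sum hG p q (I := 0) (by omega), sum_range_zero]

lemma VanishesBelowSnd.mulZW {F : ℤ → ℤ → M} {N : ℤ} (hF : VanishesBelowSnd N F) (l : ℕ) :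
    VanishesBelowSnd N (mulZW l F) := fun p q hq =>
  sum_eq_zero fun k _ => by rw [hF _ _ (by omega), smul_zero]

lemma VanishesBelowFst.mulZW {F : ℤ → ℤ → M} {N : ℤ} (hF : VanishesBelowFst N F) (l : ℕ) :
    VanishesBelowFst N (mulZW l F) := fun p q hp =>
  sum_eq_zero fun k _ => by rw [hF _ _ (by omega), smul_zero]

lemma mulZW_zero (F : ℤ → ℤ → M) : mulZW 0 F = F := by
  funext m n; simp [mulZW]

lemma mulZmW_zero (F : ℤ → ℤ → M) : mulZmW 0 F = F := by
  funext m n; simp [mulZmW]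

lemma mulZW_one_apply (F : ℤ → ℤ → M) (m n : ℤ) : mulZW 1 F m n = F (m - 1) n + F m (n - 1) := by
  simp [mulZW, sum_range_succ]

lemma mulZW_succ_apply (l : ℕ) (F : ℤ → ℤ → M) (m n : ℤ) :
    mulZW (l + 1) F m n = mulZW l F (m - 1) n + mulZW l F m (n - 1) := by
  have h := sum_choose_succ_nsmul (fun i j => F (m - j) (n - i)) l
  simp only [mulZW, natCast_zsmul] at h ⊢
  convert h using 2 <;> refine sum_congr rfl fun i hi => ?_ <;> have := mem_range.mp hi <;>
    congr 2 <;> omega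

lemma mulZW_succ (l : ℕ) (F : ℤ → ℤ → M) : mulZW (l + 1) F = mulZW 1 (mulZW l F) := by
  funext m n
  rw [mulZW_succ_apply, mulZW_one_apply]

lemma mulZmW_succ_apply (k : ℕ) (F : ℤ → ℤ → M) (m n : ℤ) :
    mulZmW (k + 1) F m n = mulZmW k F (m - 1) n - mulZmW k F m (n - 1) := by
  have h := sum_choose_succ_nsmul (fun i j => (-1 : ℤ) ^ i • F (m - j) (n - i)) k
  simp only [mulZmW, mul_smul, natCast_zsmul, smul_comm ((-1 : ℤ) ^ _) (Nat.choose _ _)] at h ⊢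
  rw [h, sub_eq_add_neg, ← sum_neg_distrib]
  congr 1 <;> refine sum_congr rfl fun i hi => ?_ <;> have := mem_range.mp hi
  · congr 3; omega
  · rw [pow_succ, mul_neg_one, neg_smul, smul_neg]
    congr 4; omega

lemma mulZW_add_eq_of_eq {l : ℕ} {F G : ℤ → ℤ → M} (h : mulZW l F = mulZW l G) (d : ℕ) :
    mulZW (l + d) F = mulZW (l + d) G := by
  induction d with
  | zero => exact h
  | succ d ih => rw [← add_assoc, mulZW_succ _ F, mulZW_succ _ G, ih]

end Series

section Substitution

variable {M : Type*} [AddCommGroup M]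

lemma sum_smul_telescope {e e' : ℕ → ℤ} (h0 : e' 0 = e 0) (hs : ∀ k, e' (k + 1) = e (k + 1) + e k)
    {H : ℕ → M} {J : ℕ} (hH : ∀ i, J ≤ i → H i = 0) :
    ∑ i ∈ range (J + 1), e' i • H i
      = ∑ i ∈ range (J + 1), e i • H i + ∑ i ∈ range (J + 1), e i • H (i + 1) := by
  rw [sum_range_succ' (fun i => e' i • H i), sum_range_succ' (fun i => e i • H i),
    sum_range_succ (fun i => e i • H (i + 1)), hH (J + 1) (by omega), smul_zero, add_zero, h0]
  simp only [hs, add_smul, sum_add_distrib]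
  abel

lemma substSub_add {F G : ℤ → ℤ → M} {N : ℤ} (hF : VanishesBelowSnd N F)
    (hG : VanishesBelowSnd N G) (m n : ℤ) :
    substSub (fun p q => F p q + G p q) m n = substSub F m n + substSub G m n := by
  have hI : n - N < ((n - N).toNat + 1 : ℕ) := by omega
  have hFG : VanishesBelowSnd N (fun p q => F p q + G p q) := fun p q hq => by
    simp [hF p q hq, hG p q hq]
  rw [substSub_eq_sum hFG m n hI, substSub_eq_sum hF m n hI, substSub_eq_sum hG m n hI,
    ← sum_add_distrib]
  simp only [smul_add]

lemma substNegAdd_add {F G : ℤ → ℤ → M} {N : ℤ} (hF : VanishesBelowFst N F)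
    (hG : VanishesBelowFst N G) (p q : ℤ) :
    substNegAdd (fun x y => F x y + G x y) p q = substNegAdd F p q + substNegAdd G p q := by
  have hJ : p - N < ((p - N).toNat + 1 : ℕ) := by omega
  have hFG : VanishesBelowFst N (fun x y => F x y + G x y) := fun x y hx => by
    simp [hF x y hx, hG x y hx]
  rw [substNegAdd_eq_sum hFG p q hJ, substNegAdd_eq_sum hF p q hJ, substNegAdd_eq_sum hG p q hJ,
    ← sum_add_distrib]
  simp only [smul_add]

lemma substSub_shiftSnd (G : ℤ → ℤ → M) (c m n : ℤ) :
    substSub (fun p q => G p (q - c)) m n = substSub G m (n - c) :=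
  finsum_congr fun i => by rw [sub_right_comm]

lemma substSub_shiftFst_one {G : ℤ → ℤ → M} {N : ℤ} (hG : VanishesBelowSnd N G) (m n : ℤ) :
    substSub (fun p q => G (p - 1) q) m n = substSub G (m - 1) n - substSub G m (n - 1) := by
  set J := (n - N).toNat + 1
  have hG' : VanishesBelowSnd N (fun p q => G (p - 1) q) := fun p q hq => hG _ _ hq
  rw [substSub_eq_sum hG' m n (I := J + 1) (by omega), substSub_eq_sum hG (m - 1) n (I := J + 1)
      (by omega), substSub_eq_sum hG m (n - 1) (I := J + 1) (by omega),
    sum_smul_telescope (by simp) (subCoeff_sub_one_succ m) (H := fun i => G (m - 1 + i) (n - i))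
      fun i hi => hG _ _ (by omega)]
  simp only [show ∀ i : ℕ, m + i - 1 = m - 1 + i by intros; ring,
    show ∀ i : ℕ, m - 1 + ((i + 1 : ℕ) : ℤ) = m + i by intros; push_cast; ring,
    show ∀ i : ℕ, n - ((i + 1 : ℕ) : ℤ) = n - 1 - i by intros; push_cast; ring]
  abel

lemma substSub_mulZW_one {G : ℤ → ℤ → M} {N : ℤ} (hG : VanishesBelowSnd N G) (m n : ℤ) :
    substSub (mulZW 1 G) m n = substSub G (m - 1) n := by
  simp only [funext₂ (mulZW_one_apply G)]
  rw [substSub_add (fun p q hq => hG _ _ hq) (fun p q hq => hG _ _ (by omega)),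
    substSub_shiftFst_one hG, substSub_shiftSnd G 1]
  abel

lemma substSub_mulZW {G : ℤ → ℤ → M} {N : ℤ} (hG : VanishesBelowSnd N G) (l : ℕ) (m n : ℤ) :
    substSub (mulZW l G) m n = substSub G (m - l) n := by
  induction l generalizing m with
  | zero => simp [mulZW_zero]
  | succ l ih =>
    rw [mulZW_succ, substSub_mulZW_one (hG.mulZW l), ih]
    push_cast; ring_nf

lemma substSub_shiftFst {G : ℤ → ℤ → M} {N : ℤ} (hG : VanishesBelowSnd N G) (k : ℕ) (m n : ℤ) :
    substSub (fun p q => G (p - k) q) m n = mulZmW k (substSub G) m n := by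
  induction k generalizing m n with
  | zero => simp [mulZmW_zero]
  | succ k ih =>
    rw [mulZmW_succ_apply, ← ih, ← ih, ← substSub_shiftFst_one (fun p q hq => hG _ _ hq)]
    simp only [Nat.cast_succ, sub_sub, add_comm (1 : ℤ)]

lemma substNegAdd_shiftFst_one (F : ℤ → ℤ → M) (p q : ℤ) :
    substNegAdd (fun x y => F (x - 1) y) p q = -substNegAdd F (p - 1) q := by
  rw [substNegAdd, substNegAdd, ← finsum_neg_distrib]
  refine finsum_congr fun j => ?_
  rw [negAddCoeff_sub_one_left, neg_smul, neg_neg, sub_right_comm]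

lemma substNegAdd_shiftSnd_one {F : ℤ → ℤ → M} {N : ℤ} (hF : VanishesBelowFst N F) (p q : ℤ) :
    substNegAdd (fun x y => F x (y - 1)) p q
      = substNegAdd F (p - 1) q + substNegAdd F p (q - 1) := by
  set J := (p - N).toNat + 1
  have hF' : VanishesBelowFst N (fun x y => F x (y - 1)) := fun x y hx => hF _ _ hx
  rw [substNegAdd_eq_sum hF' p q (J := J + 1) (by omega), substNegAdd_eq_sum hF (p - 1) q
      (J := J + 1) (by omega), substNegAdd_eq_sum hF p (q - 1) (J := J + 1) (by omega),
    sum_smul_telescope (by simp) (negAddCoeff_sub_one_succ p q)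
      (H := fun j => F (p - j) (q - 1 + j)) fun j hj => hF _ _ (by omega)]
  have hL : ∀ j : ℕ, F (p - j) (q + j - 1) = F (p - j) (q - 1 + j) := fun j => by ring_nf
  have hR : ∀ j : ℕ, negAddCoeff (p - 1) q j • F (p - 1 - j) (q + j)
      = -(negAddCoeff p q j • F (p - ((j + 1 : ℕ) : ℤ)) (q - 1 + ((j + 1 : ℕ) : ℤ))) := fun j => by
    rw [negAddCoeff_sub_one_left, neg_smul]; push_cast; ring_nf
  simp only [hL, hR, sum_neg_distrib]
  abel

lemma substNegAdd_mulZW_one {F : ℤ → ℤ → M} {N : ℤ} (hF : VanishesBelowFst N F) (p q : ℤ) :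
    substNegAdd (mulZW 1 F) p q = substNegAdd F p (q - 1) := by
  simp only [funext₂ (mulZW_one_apply F)]
  rw [substNegAdd_add (fun x y hx => hF _ _ (by omega)) (fun x y hx => hF _ _ hx),
    substNegAdd_shiftFst_one, substNegAdd_shiftSnd_one hF]
  abel

lemma substNegAdd_mulZW {F : ℤ → ℤ → M} {N : ℤ} (hF : VanishesBelowFst N F) (l : ℕ) (p q : ℤ) :
    substNegAdd (mulZW l F) p q = substNegAdd F p (q - l) := by
  induction l generalizing q with
  | zero => simp [mulZW_zero]
  | succ l ih =>
    rw [mulZW_succ, substNegAdd_mulZW_one (hF.mulZW l), ih]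
    push_cast; ring_nf

lemma substNegAdd_shiftFst (F : ℤ → ℤ → M) (k : ℕ) (p q : ℤ) :
    substNegAdd (fun x y => F (x - k) y) p q = (-1) ^ k • substNegAdd F (p - k) q := by
  induction k generalizing p with
  | zero => simp
  | succ k ih =>
    have h : (fun x y => F (x - (k + 1 : ℕ)) y) = fun x y => F (x - 1 - k) y := by
      funext x y; push_cast; ring_nf
    rw [h, substNegAdd_shiftFst_one (fun x y => F (x - k) y), ih, pow_succ, mul_neg_one, neg_smul,
      sub_sub, Nat.cast_succ, add_comm (k : ℤ)]

lemma substNegAdd_shiftSnd {F : ℤ → ℤ → M} {N : ℤ} (hF : VanishesBelowFst N F) (l : ℕ) (p q : ℤ) :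
    substNegAdd (fun x y => F x (y - l)) p q = mulZW l (substNegAdd F) p q := by
  induction l generalizing p q with
  | zero => simp [mulZW_zero]
  | succ l ih =>
    rw [mulZW_succ_apply, ← ih, ← ih, ← substNegAdd_shiftSnd_one (fun x y hx => hF _ _ hx)]
    simp only [Nat.cast_succ, sub_sub, add_comm (1 : ℤ)]

lemma substSub_substAdd {G : ℤ → ℤ → M} {N : ℤ} (hG : VanishesBelowSnd N G) (m n : ℤ) :
    substSub (substAdd G) m n = G m n := by
  set I := (n - N).toNat + 1
  have hinner : ∀ i ∈ range I, subCoeff m i • substAdd G (m + i) (n - i) = ∑ j ∈ range (I - i),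
      subCoeff m i • Ring.choose (m + i + j) j • G (m + i + j) (n - i - j) := fun i hi => by
    rw [substAdd_eq_sum hG _ _ (I := I - i) (by have := mem_range.mp hi; omega), smul_sum]
  rw [substSub_eq_sum hG.substAdd m n (I := I) (by omega), sum_congr rfl hinner,
    ← sum_range_diag_flip I fun i j =>
      subCoeff m i • Ring.choose (m + i + j) j • G (m + i + j) (n - i - j)]
  have hdiag : ∀ s ∈ range I, ∑ i ∈ range (s + 1), subCoeff m i •
      Ring.choose (m + i + (s - i : ℕ)) (s - i) • G (m + i + (s - i : ℕ)) (n - i - (s - i : ℕ))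
      = (if s = 0 then 1 else 0 : ℤ) • G (m + s) (n - s) := fun s _ => by
    rw [← sum_subCoeff_mul_choose m s, sum_smul]
    refine sum_congr rfl fun i hi => ?_
    have : i ≤ s := by have := mem_range.mp hi; omega
    rw [smul_smul, show m + i + ((s - i : ℕ) : ℤ) = m + s by omega,
      show n - i - ((s - i : ℕ) : ℤ) = n - s by omega]
  rw [sum_congr rfl hdiag, sum_eq_single_of_mem 0 (by simp [I]) fun s _ hs => by simp [hs]]
  simp

lemma mulZmW_swap (k : ℕ) (F : ℤ → ℤ → M) (m n : ℤ) :
    mulZmW k (fun x y => F y x) m n = (-1) ^ k • mulZmW k F n m := by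
  rw [mulZmW, mulZmW, smul_sum, ← sum_range_reflect]
  refine sum_congr rfl fun j hj => ?_
  have hjk : j ≤ k := by have := mem_range.mp hj; omega
  rw [smul_smul, show k + 1 - 1 - j = k - j by omega, Nat.choose_symm hjk,
    show k - (k - j) = j by omega, ← mul_assoc, ← pow_add,
    show k + j = k - j + 2 * j by omega, pow_add, pow_mul]
  simp

end Substitution

section SubOneCoeff

/-- The coefficient of `Y^m` in `(Y - 1)^p`. -/
noncomputable def subOneCoeff (m : ℤ) (p : ℕ) : ℤ :=
  if 0 ≤ m then ((X - 1 : ℤ[X]) ^ p).coeff m.toNat else 0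

lemma coeff_X_sub_one_pow (p k : ℕ) :
    ((X - 1 : ℤ[X]) ^ p).coeff k = (-1) ^ (p - k) * p.choose k := by
  rw [sub_eq_add_neg, ← C_1, ← C_neg, coeff_X_add_C_pow]

lemma subOneCoeff_eq_subCoeff {m : ℤ} {i p : ℕ} (hp : (p : ℤ) = m + i) :
    subOneCoeff m p = subCoeff m i := by
  rw [subOneCoeff, subCoeff, ← hp, Ring.choose_natCast]
  split_ifs with hm
  · rw [coeff_X_sub_one_pow, show p - m.toNat = i by omega, ← Nat.choose_symm (by omega),
      show p - m.toNat = i by omega]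
  · rw [Nat.choose_eq_zero_of_lt (by omega)]
    simp

lemma subOneCoeff_eq_zero_of_lt {m : ℤ} {p : ℕ} (h : (p : ℤ) < m) : subOneCoeff m p = 0 := by
  rw [subOneCoeff, if_pos (by omega), coeff_X_sub_one_pow, Nat.choose_eq_zero_of_lt (by omega)]
  simp

lemma sum_choose_mul_subOneCoeff (D q : ℕ) (w : ℤ) :
    ∑ j ∈ range (D + 1), (D.choose j : ℤ) * subOneCoeff w (q + j) = subOneCoeff (w - D) q := by
  by_cases hw : 0 ≤ w
  · have hpoly : ∑ j ∈ range (D + 1), C (D.choose j : ℤ) * (X - 1 : ℤ[X]) ^ (q + j)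
        = X ^ D * (X - 1) ^ q := by
      rw [show (X : ℤ[X]) ^ D = ((X - 1) + 1) ^ D by ring, add_pow, sum_mul]
      refine sum_congr rfl fun j _ => ?_
      rw [← C_eq_natCast, one_pow, pow_add]
      ring
    have h := congrArg (coeff · w.toNat) hpoly
    simp only [finsetSum_coeff, coeff_C_mul, coeff_X_pow_mul'] at h
    simp only [subOneCoeff, if_pos hw, h]
    split_ifs <;> first | rfl | (congr 1; omega)
  · simp only [subOneCoeff, hw, if_false, mul_zero, sum_const_zero]
    rw [if_neg (by omega)]

lemma neg_one_pow_mul_subOneCoeff (m : ℤ) (p : ℕ) :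
    (-1) ^ p * subOneCoeff (p - m) p = subOneCoeff m p := by
  simp only [subOneCoeff]
  split_ifs with h1 h2 h2
  · rw [coeff_X_sub_one_pow, coeff_X_sub_one_pow, show (p - m).toNat = p - m.toNat by omega,
      Nat.choose_symm (by omega), show p - (p - m.toNat) = m.toNat by omega, ← mul_assoc, ← pow_add,
      show p + m.toNat = p - m.toNat + 2 * m.toNat by omega, pow_add, pow_mul]
    simp
  · rw [coeff_X_sub_one_pow, Nat.choose_eq_zero_of_lt (by omega)]
    simp
  · rw [coeff_X_sub_one_pow, Nat.choose_eq_zero_of_lt (by omega)]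
    simp
  · simp

end SubOneCoeff

section Symmetry

variable {M : Type*} [AddCommGroup M]

lemma finsum_comp_eq_sum_range {f : ℤ → M} {g : ℕ → ℤ} (hg : Function.Injective g) {B : ℕ}
    (hf : ∀ p, f p ≠ 0 → p ∈ Set.range g ∧ 0 ≤ p ∧ p ≤ B) :
    ∑ᶠ i, f (g i) = ∑ p ∈ range (B + 1), f p := by
  rw [← finsum_mem_range hg,
    finsum_cond_eq_sum_of_cond_iff f (t := (range (B + 1)).map Nat.castEmbedding), sum_map]
  · rfl
  intro p hp
  obtain ⟨hr, h0, hB⟩ := hf p hp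
  simp only [hr, true_iff, mem_map, mem_range, Nat.castEmbedding_apply]
  exact ⟨p.toNat, by omega, by omega⟩

lemma sum_range_eq_sum_range_add {g : ℕ → M} {a L R : ℕ} (hlow : ∀ r < a, g r = 0)
    (hhigh : ∀ r, a + L < r → g r = 0) (hR : a + L < R) :
    ∑ r ∈ range R, g r = ∑ j ∈ range (L + 1), g (a + j) := by
  rw [show L + 1 = a + L + 1 - a by omega, ← sum_Ico_eq_sum_range]
  refine (sum_subset (fun r hr => ?_) fun r _ hr => ?_).symm
  · simp only [mem_Ico, mem_range] at hr ⊢; omega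
  · simp only [mem_Ico, not_and_or, not_le, not_lt] at hr
    rcases hr with hr | hr
    · exact hlow r hr
    · exact hhigh r (by omega)

lemma sum_range_choose_mul_ite_choose (D k : ℕ) (x : ℤ) :
    ∑ j ∈ range (D + 1), (D.choose j : ℤ) * (if j ≤ k then Ring.choose x (k - j) else 0)
      = Ring.choose (x + D) k := by
  rw [Ring.add_choose_eq k (Commute.all _ _),
    Finset.Nat.sum_antidiagonal_eq_sum_range_succ
      (fun a b => Ring.choose x a * Ring.choose (D : ℤ) b),
    ← sum_range_reflect (fun a => Ring.choose x a * Ring.choose (D : ℤ) (k - a)) (k + 1)]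
  set T : ℕ → ℤ := fun j => (D.choose j : ℤ) * (if j ≤ k then Ring.choose x (k - j) else 0)
  have hD : ∑ j ∈ range (D + 1), T j = ∑ j ∈ range (D + k + 1), T j :=
    sum_subset (fun j hj => by simp only [mem_range] at hj ⊢; omega) fun j _ hj => by
      simp only [mem_range] at hj
      simp [T, Nat.choose_eq_zero_of_lt (show D < j by omega)]
  have hk : ∑ j ∈ range (k + 1), T j = ∑ j ∈ range (D + k + 1), T j :=
    sum_subset (fun j hj => by simp only [mem_range] at hj ⊢; omega) fun j _ hj => by
      simp only [mem_range] at hj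
      simp [T, show ¬ j ≤ k by omega]
  rw [hD, ← hk]
  refine sum_congr rfl fun j hj => ?_
  have hjk : j ≤ k := by simp only [mem_range] at hj; omega
  simp only [T, if_pos hjk, Ring.choose_natCast, show k + 1 - 1 - j = k - j by omega,
    show k - (k - j) = j by omega, mul_comm]

/-- The coefficient of `X^q` in `(-X)^p (1 + X)^(S - p)`. -/
def skewCoeff (S q : ℤ) (p : ℕ) : ℤ :=
  if (p : ℤ) ≤ q then (-1) ^ p * Ring.choose (S - p) (q - p).toNat else 0

/-- The coefficient of `X^r` in `(1 + X)^D t(X)`. -/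
def mulOneAddPow (D : ℕ) (t : ℤ → M) (r : ℕ) : M :=
  ∑ j ∈ range (D + 1), (D.choose j : ℤ) • t (r - j)

lemma mulOneAddPow_eq_of_transform {h t : ℤ → M} {S : ℤ} {P : ℕ}
    (ht : ∀ q, t q = ∑ p ∈ range (P + 1), skewCoeff S q p • h p) (D r : ℕ) :
    mulOneAddPow D t r = ∑ p ∈ range (P + 1),
      (if p ≤ r then (-1) ^ p * Ring.choose (S - p + D) (r - p) else 0) • h p := by
  simp only [mulOneAddPow, ht, skewCoeff, smul_sum, smul_smul]
  rw [sum_comm]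
  refine sum_congr rfl fun p _ => ?_
  rw [← sum_smul]
  congr 1
  split_ifs with hpr
  · rw [← sum_range_choose_mul_ite_choose D (r - p) (S - p), mul_sum]
    refine sum_congr rfl fun j _ => ?_
    by_cases hj : j ≤ r - p
    · rw [if_pos (by omega), if_pos hj, show ((r : ℤ) - j - p).toNat = r - p - j by omega]
      ring
    · rw [if_neg (by omega), if_neg hj]
      ring
  · exact sum_eq_zero fun j _ => by rw [if_neg (by omega), mul_zero]

lemma sum_subOneCoeff_smul_mulOneAddPow_of_transform {h t : ℤ → M} {S : ℤ} {P : ℕ}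
    (ht : ∀ q, t q = ∑ p ∈ range (P + 1), skewCoeff S q p • h p) {D R : ℕ} (hD : (P : ℤ) ≤ S + D)
    (hR : S + D < R) {m n : ℤ} (hmn : m + n = S) :
    ∑ r ∈ range R, subOneCoeff (n + D) r • mulOneAddPow D t r
      = ∑ p ∈ range (P + 1), subOneCoeff m p • h p := by
  simp only [mulOneAddPow_eq_of_transform ht, smul_sum, smul_smul]
  rw [sum_comm]
  refine sum_congr rfl fun p hp => ?_
  rw [← sum_smul]
  congr 1
  have hpP : p ≤ P := by simp only [mem_range] at hp; omega
  obtain ⟨E, hE⟩ : ∃ E : ℕ, (E : ℤ) = S - p + D := ⟨(S - p + D).toNat, by omega⟩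
  rw [sum_range_eq_sum_range_add (a := p) (L := E)
    (fun r hr => by rw [if_neg (by omega), mul_zero]) (fun r hr => by
      rw [if_pos (by omega), ← hE, Ring.choose_natCast, Nat.choose_eq_zero_of_lt (by omega)]
      simp) (by omega)]
  simp only [if_pos (Nat.le_add_right _ _), Nat.add_sub_cancel_left, ← hE, Ring.choose_natCast]
  rw [← neg_one_pow_mul_subOneCoeff m p, show (p : ℤ) - m = n + D - E by omega,
    ← sum_choose_mul_subOneCoeff E p, mul_sum]
  exact sum_congr rfl fun j _ => by ring

lemma sum_subOneCoeff_smul_mulOneAddPow {t : ℤ → M} {Q D R : ℕ} (hlow : ∀ q < 0, t q = 0)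
    (hhigh : ∀ q, (Q : ℤ) < q → t q = 0) (hR : Q + D < R) (n : ℤ) :
    ∑ r ∈ range R, subOneCoeff (n + D) r • mulOneAddPow D t r
      = ∑ q ∈ range (Q + 1), subOneCoeff n q • t q := by
  simp only [mulOneAddPow, smul_sum, smul_smul]
  rw [sum_comm]
  have hinner : ∀ j ∈ range (D + 1),
      ∑ r ∈ range R, (subOneCoeff (n + D) r * D.choose j) • t (r - j)
        = ∑ q ∈ range (Q + 1), (subOneCoeff (n + D) (j + q) * D.choose j) • t q := fun j hj => by
    simp only [mem_range] at hj
    rw [sum_range_eq_sum_range_add (a := j) (L := Q)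
      (fun r hr => by rw [hlow _ (by omega), smul_zero])
      (fun r hr => by rw [hhigh _ (by omega), smul_zero]) (by omega)]
    simp
  rw [sum_congr rfl hinner, sum_comm]
  refine sum_congr rfl fun q _ => ?_
  rw [← sum_smul, ← add_sub_cancel_right n (D : ℤ), ← sum_choose_mul_subOneCoeff D q (n + D)]
  simp only [add_sub_cancel_right]
  exact congrArg (· • t q) (sum_congr rfl fun j _ => by rw [mul_comm, add_comm j q])

/-- If `t(X) = ∑ h_p (-X)^p (1 + X)^(S - p)` is a polynomial, then `(1 + X)^D t(X)` is a
polynomial identity for large `D`, and substituting `X = Y - 1` compares the coefficients of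
`h(Y - 1)` and `t(Y - 1)`. -/
lemma sum_subOneCoeff_smul_eq_of_transform {h t : ℤ → M} {S : ℤ} {P Q : ℕ}
    (ht : ∀ q, t q = ∑ p ∈ range (P + 1), skewCoeff S q p • h p)
    (htQ : ∀ q, (Q : ℤ) < q → t q = 0) {m n : ℤ} (hmn : m + n = S) :
    ∑ p ∈ range (P + 1), subOneCoeff m p • h p = ∑ q ∈ range (Q + 1), subOneCoeff n q • t q := by
  have hlow : ∀ q < 0, t q = 0 := fun q hq => by
    rw [ht]
    exact sum_eq_zero fun p _ => by rw [skewCoeff, if_neg (by omega), zero_smul]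
  rw [← sum_subOneCoeff_smul_mulOneAddPow_of_transform ht (D := (P - S).toNat)
      (R := Q + (P - S).toNat + S.toNat + P + 1) (by omega) (by omega) hmn,
    sum_subOneCoeff_smul_mulOneAddPow hlow htQ (by omega)]

lemma finsum_subCoeff_smul_eq_sum {f : ℤ → M} {B : ℕ} (hf : ∀ p, f p ≠ 0 → 0 ≤ p ∧ p ≤ B)
    (x : ℤ) : ∑ᶠ i : ℕ, subCoeff x i • f (x + i) = ∑ p ∈ range (B + 1), subOneCoeff x p • f p := by
  have key := finsum_comp_eq_sum_range (f := fun p => subOneCoeff x p.toNat • f p)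
    (g := fun i : ℕ => x + i) (fun a b hab => by simpa using hab) (B := B) fun p hp => by
      have hfp : f p ≠ 0 := fun h => hp (by simp [h])
      obtain ⟨h0, hB⟩ := hf p hfp
      have hxp : x ≤ p := by
        by_contra hlt
        exact hp (by rw [subOneCoeff_eq_zero_of_lt (by omega), zero_smul])
      exact ⟨⟨(p - x).toNat, by simp only; omega⟩, h0, hB⟩
  simp only [Int.toNat_natCast] at key
  rw [← key]
  refine finsum_congr fun i => ?_
  by_cases hi : 0 ≤ x + i
  · rw [subOneCoeff_eq_subCoeff (p := (x + i).toNat) (i := i) (by omega)]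
  · rw [not_imp_comm.mp (hf _) (by omega), smul_zero, smul_zero]

lemma substNegAdd_eq_sum_skewCoeff {H : ℤ → ℤ → M} {P : ℕ} (S q : ℤ)
    (hH : ∀ p, H p (S - p) ≠ 0 → 0 ≤ p ∧ p ≤ P) :
    substNegAdd H q (S - q) = ∑ p ∈ range (P + 1), skewCoeff S q p • H p (S - p) := by
  have key := finsum_comp_eq_sum_range (f := fun p => skewCoeff S q p.toNat • H p (S - p))
    (g := fun j : ℕ => q - j) (fun a b hab => by simpa using hab) (B := P) fun p hp => by
      have hfp : H p (S - p) ≠ 0 := fun h => hp (by simp [h])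
      obtain ⟨h0, hB⟩ := hH p hfp
      have hpq : p ≤ q := by
        by_contra hlt
        exact hp (by rw [skewCoeff, if_neg (by omega), zero_smul])
      exact ⟨⟨(q - p).toNat, by simp only; omega⟩, h0, hB⟩
  simp only [Int.toNat_natCast] at key
  rw [← key]
  refine finsum_congr fun j => ?_
  rw [show S - q + j = S - (q - j) by ring]
  by_cases hj : 0 ≤ q - j
  · obtain ⟨p, hp⟩ : ∃ p : ℕ, (p : ℤ) = q - j := ⟨(q - j).toNat, by omega⟩
    rw [← hp, skewCoeff, Int.toNat_natCast, if_pos (by omega), negAddCoeff, ← hp,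
      Int.coe_negOnePow_natCast, show (q - p).toNat = j by omega, show S - q + j = S - p by omega]
  · rw [not_imp_comm.mp (hH _) (by omega), smul_zero, smul_zero]

/-- Formally, `H(-z, w + z)` at `z = x - y`, `w = y` is `H(y - x, x)`. -/
theorem substSub_substNegAdd {H : ℤ → ℤ → M} {N N' : ℤ} (h0 : VanishesBelowFst 0 H)
    (hH : VanishesBelowSnd N H) (hT : VanishesBelowSnd N' (substNegAdd H)) (m n : ℤ) :
    substSub (substNegAdd H) n m = substSub H m n := by
  set S := m + n
  have hHsupp : ∀ p, H p (S - p) ≠ 0 → 0 ≤ p ∧ p ≤ (S - N).toNat := fun p hp =>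
    ⟨not_lt.mp fun h => hp (h0 _ _ h), not_lt.mp fun h => hp (hH _ _ (by omega))⟩
  have hTsupp : ∀ q, substNegAdd H q (S - q) ≠ 0 → 0 ≤ q ∧ q ≤ (S - N').toNat := fun q hq =>
    ⟨not_lt.mp fun h => hq <| by
      rw [substNegAdd_eq_sum h0 _ _ (J := 0) (by omega), sum_range_zero],
      not_lt.mp fun h => hq (hT _ _ (by omega))⟩
  have hL : substSub H m n = ∑ p ∈ range ((S - N).toNat + 1), subOneCoeff m p • H p (S - p) := by
    rw [← finsum_subCoeff_smul_eq_sum hHsupp m]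
    exact finsum_congr fun i => by rw [show n - i = S - (m + i) by ring]
  have hR : substSub (substNegAdd H) n m = ∑ q ∈ range ((S - N').toNat + 1),
      subOneCoeff n q • substNegAdd H q (S - q) := by
    rw [← finsum_subCoeff_smul_eq_sum hTsupp n]
    exact finsum_congr fun i => by rw [show m - i = S - (n + i) by ring]
  rw [hL, hR]
  exact (sum_subOneCoeff_smul_eq_of_transform (h := fun p => H p (S - p))
    (t := fun q => substNegAdd H q (S - q)) (fun q => substNegAdd_eq_sum_skewCoeff S q hHsupp)
    (fun q hq => hT _ _ (by omega)) rfl).symm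

end Symmetry

section Locality

variable {M : Type*} [AddCommGroup M]

lemma mulZW_shiftSnd (l : ℕ) (G : ℤ → ℤ → M) (c p q : ℤ) :
    mulZW l (fun x y => G x (y - c)) p q = mulZW l G p (q - c) :=
  sum_congr rfl fun k _ => by rw [sub_right_comm]

lemma substSub_zsmul {G : ℤ → ℤ → M} {N : ℤ} (hG : VanishesBelowSnd N G) (c : ℤ) (m n : ℤ) :
    substSub (fun p q => c • G p q) m n = c • substSub G m n := by
  have hI : n - N < ((n - N).toNat + 1 : ℕ) := by omega
  rw [substSub_eq_sum (fun p q hq => by simp [hG p q hq]) m n hI, substSub_eq_sum hG m n hI,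
    smul_sum]
  simp only [smul_comm c]

/-- `substSub` undoes `substAdd`: `x^k y^l (x + y)^l G(x + y, y)` becomes
`(x - y)^k x^l y^l G(x, y)`. -/
lemma substSub_shift_mulZW_substAdd {G : ℤ → ℤ → M} {N : ℤ} (hG : VanishesBelowSnd N G)
    (k l : ℕ) (m n : ℤ) :
    substSub (fun p q => mulZW l (substAdd G) (p - k) (q - l)) (m + l) (n + l)
      = mulZmW k G m n := by
  rw [substSub_shiftSnd (fun p q => mulZW l (substAdd G) (p - k) q), add_sub_cancel_right,
    substSub_shiftFst (hG.substAdd.mulZW l)]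
  refine sum_congr rfl fun j _ => ?_
  rw [substSub_mulZW hG.substAdd, substSub_substAdd hG,
    show m + l - (k - j : ℕ) - l = m - (k - j : ℕ) by ring]

/-- In the application `F(x, y) = (a_x b)_y u`, `A(x, y) = a_x b_y u`, `B(x, y) = b_x a_y u`,
and `hFB` is associativity for `(b, a)` combined with skew-symmetry. -/
theorem mulZmW_eq_of_assoc_of_skew {F A B : ℤ → ℤ → M} {k l : ℕ} {NA NB : ℤ}
    (hF : VanishesBelowFst (-k) F) (hA : VanishesBelowSnd NA A) (hB : VanishesBelowSnd NB B)
    (hFA : mulZW l F = mulZW l (substAdd A))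
    (hFB : mulZW l (substNegAdd F) = mulZW l (substAdd B)) :
    mulZmW k A = mulZmW k (fun x y => B y x) := by
  funext m n
  set H : ℤ → ℤ → M := fun p q => mulZW l F (p - k) (q - l)
  have hHA : H = fun p q => mulZW l (substAdd A) (p - k) (q - l) := by simp only [H, hFA]
  have hHB : substNegAdd H = fun p q => (-1) ^ k • mulZW l (substAdd B) (p - k) (q - l) := by
    funext p q
    rw [substNegAdd_shiftFst (fun x y => mulZW l F x (y - l)), substNegAdd_shiftSnd (hF.mulZW l),
      funext₂ (substNegAdd_mulZW hF l), mulZW_shiftSnd, hFB]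
  have hH0 : VanishesBelowFst 0 H := fun p q hp => hF.mulZW l _ _ (by omega)
  have hHsnd : VanishesBelowSnd (NA + l) H := hHA ▸ fun p q hq =>
    hA.substAdd.mulZW l _ _ (by omega)
  have hBsnd : VanishesBelowSnd (NB + l) (fun p q => mulZW l (substAdd B) (p - k) (q - l)) :=
    fun p q hq => hB.substAdd.mulZW l _ _ (by omega)
  have hTsnd : VanishesBelowSnd (NB + l) (substNegAdd H) := fun p q hq => by
    rw [hHB]
    exact (congrArg _ (hBsnd p q hq)).trans (smul_zero _)
  rw [mulZmW_swap k B, ← substSub_shift_mulZW_substAdd hA, ← substSub_shift_mulZW_substAdd hB,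
    ← hHA, ← substSub_substNegAdd hH0 hHsnd hTsnd, hHB, substSub_zsmul hBsnd]

end Locality

lemma ascPochhammer_eval_add_one (q : ℤ) (j : ℕ) :
    (ascPochhammer ℤ j).eval (q + 1) = j.factorial * Ring.choose (q + j) j := by
  rw [← ascPochhammer_smeval_eq_eval, ← Ring.factorial_nsmul_multichoose_eq_ascPochhammer,
    Ring.multichoose_eq, nsmul_eq_mul, show q + 1 + j - 1 = q + j by ring]

section Module

variable {𝕜 : Type*} [Field 𝕜]
  {V M : Type*} [AddCommGroup V] [Module 𝕜 V] [AddCommGroup M] [Module 𝕜 M]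
  {Y : V → V → ℤ → V} {one : V} {D : V →ₗ[𝕜] V} {YM : V → M → ℤ → M} {d : M →ₗ[𝕜] M}

lemma IsVModule.transl_pow (hM : IsVModule 𝕜 Y one D YM d) (c : V) (u : M) (j : ℕ)
    (q : ℤ) :
    YM ((D ^ j) c) u q = (ascPochhammer ℤ j).eval (q + 1) • YM c u (q + j) := by
  induction j generalizing q with
  | zero => simp
  | succ j ih =>
    rw [pow_succ', Module.End.mul_apply, hM.transl, derivz, ih, smul_smul, ascPochhammer_succ_left]
    simp only [eval_mul, eval_X, eval_comp, eval_add, eval_one, Nat.cast_succ]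
    ring_nf

/-- Skew-symmetry `b_z a = e^{zD} a_{-z} b` acts on `M` as the substitution
`(z, w) ↦ (-z, w + z)`, because `D` acts as `d/dz`. -/
lemma IsVModule.skew_eq_substNegAdd [CharZero 𝕜] (hV : IsVertexAlg 𝕜 Y one D)
    (hM : IsVModule 𝕜 Y one D YM d) (a b : V) (u : M) :
    (fun p q => YM (Y b a p) u q) = substNegAdd (fun p q => YM (Y a b p) u q) := by
  funext p q
  obtain ⟨N, hN⟩ := hV.trunc a b
  have hF : VanishesBelowFst N (fun x y => YM (Y a b x) u y) := fun x y hx => by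
    simp only [hN x hx, (hM.linear_left u y).map_zero]
  set J := (p - N).toNat + 1
  have hYba : Y b a p = ∑ j ∈ range J, ((j.factorial : 𝕜)⁻¹) • (D ^ j) (negz (Y a b) (p - j)) := by
    rw [hV.comm b a, ezd]
    exact finsum_eq_sum_range_of_eq_zero _ J fun j hj => by
      rw [negz, hN _ (by omega), smul_zero, map_zero, smul_zero]
  let e : V →ₗ[𝕜] M := IsLinearMap.mk' (fun v => YM v u q) (hM.linear_left u q)
  change e (Y b a p) = _
  rw [hYba, map_sum, substNegAdd_eq_sum hF p q (J := J) (by omega)]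
  refine sum_congr rfl fun j _ => ?_
  rw [map_smul, negz, map_zsmul, map_zsmul]
  change _ • _ • YM ((D ^ j) (Y a b (p - j))) u q = _
  rw [hM.transl_pow, ascPochhammer_eval_add_one, negAddCoeff, mul_comm, mul_smul, mul_smul,
    smul_comm _ ((p - j).negOnePow : ℤ), smul_comm (Ring.choose (q + j) j) ((j.factorial : ℕ) : ℤ),
    natCast_zsmul, ← Nat.cast_smul_eq_nsmul 𝕜,
    inv_smul_smul₀ (Nat.cast_ne_zero.mpr (Nat.factorial_ne_zero j))]

end Module

variable (𝕜 : Type*) [Field 𝕜] [CharZero 𝕜]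
  {V M : Type*} [AddCommGroup V] [Module 𝕜 V] [AddCommGroup M] [Module 𝕜 M]
  (Y : V → V → ℤ → V) (one : V) (D : V →ₗ[𝕜] V)
  (YM : V → M → ℤ → M) (d : M →ₗ[𝕜] M)

/-- any module over a vertex algebra satisfies weak commutativity
(locality): for all `a, b ∈ V` there is `k` with
`(x-y)^k a_x (b_y u) = (x-y)^k b_y (a_x u)` for all `u ∈ M`. -/
theorem module_locality
    (hV : IsVertexAlg 𝕜 Y one D) (hM : IsVModule 𝕜 Y one D YM d) :
    ∀ a b : V, ∃ k : ℕ, ∀ u : M,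
      mulZmW k (fun m n => YM a (YM b u n) m) = mulZmW k (fun m n => YM b (YM a u m) n) := by
  intro a b
  obtain ⟨N, hN⟩ := hV.trunc a b
  refine ⟨(-N).toNat, fun u => ?_⟩
  obtain ⟨l₁, h₁⟩ := hM.assoc a b u
  obtain ⟨l₂, h₂⟩ := hM.assoc b a u
  obtain ⟨Na, hNa⟩ := hM.trunc a u
  obtain ⟨Nb, hNb⟩ := hM.trunc b u
  rw [shiftComp_eq_substAdd] at h₁ h₂
  refine mulZmW_eq_of_assoc_of_skew (l := l₁ + l₂) (NA := Nb) (NB := Na) (fun x y hx => ?_)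
    (fun x y hy => ?_) (fun x y hy => ?_) (mulZW_add_eq_of_eq h₁ l₂) ?_
  · simp only [hN x (by omega), (hM.linear_left u y).map_zero]
  · simp only [hNb y hy, (hM.linear_right a x).map_zero]
  · simp only [hNa y hy, (hM.linear_right b x).map_zero]
  · rw [← hM.skew_eq_substNegAdd hV, add_comm]
    exact mulZW_add_eq_of_eq h₂ l₁

end VertexCohomology
end

section
/- Let $V$ be a vertex algebra, $M$ a $V$-module, and let $\psi, \phi \in Z^2(V,M)$ determine square-zero extensions $(V\oplus M, {}_z^1, p_1, i_2)$ and $(V\oplus M, {}_z^2, p_1, i_2)$. Suppose $h : V \oplus M \to V \oplus M$ is an isomorphism of vertex algebras with $p_1 \circ h = p_1$ and $h \circ i_2 = i_2$. Then there exists $g \in C^1(V,M)$ (i.e. $g$ linear with $g(Da) = dg(a)$ and $g(\mathbf{1}) = 0$) such that $h(a,u) = (a, u + g(a))$ for all $(a,u)$, and $\psi = \phi + \delta_1(g)$. -/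
/- Coefficient-wise formalization of vertex algebras:
a series `w ∈ V((z))` is encoded by its coefficient function `ℤ → V`
(the value at `n` being the coefficient of `z^n`), and a field/product
`a ⊗ b ↦ a_z b ∈ V((z))` by a map `V → V → ℤ → V`. -/

namespace VertexCohomology

open scoped BigOperators

/- Since `h` fixes first coordinates and the copy of `M`, linearity forces
`h (a, u) = (a, u + g a)` with `g a` the `M`-component of `h (a, 0)`. Then `g` commutes with
translation and kills the vacuum because `h` does, and comparing the `M`-components of
`h ((a, 0)_z (b, 0))` computed in the two extensions gives `ψ = φ + δ₁ g`. -/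

section ExtensionMorphism

variable {R V M : Type*} [Semiring R] [AddCommMonoid V] [Module R V]
  [AddCommMonoid M] [Module R M]

def offset (h : V × M →ₗ[R] V × M) : V →ₗ[R] M :=
  LinearMap.snd R V M ∘ₗ h ∘ₗ LinearMap.inl R V M

theorem apply_eq_add_offset (h : V × M →ₗ[R] V × M) (hp1 : ∀ p : V × M, (h p).1 = p.1)
    (hi2 : ∀ u : M, h ((0 : V), u) = ((0 : V), u)) (a : V) (u : M) :
    h (a, u) = (a, u + offset h a) := by
  have hinl : h (a, 0) = (a, offset h a) := Prod.ext (hp1 _) rfl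
  calc h (a, u) = h ((a, 0) + (0, u)) := by simp
    _ = (a, u + offset h a) := by rw [map_add, hinl, hi2, Prod.mk_add_mk, add_zero, add_comm]

end ExtensionMorphism

section ExtensionProduct

variable {𝕜 V M : Type*} [Field 𝕜] [AddCommGroup M] [Module 𝕜 M]

theorem rAct_zero_left {YM : V → M → ℤ → M} (d : M →ₗ[𝕜] M) {b : V}
    (hYM : ∀ n, YM b 0 n = 0) : rAct 𝕜 YM d 0 b = 0 := by
  funext n
  simp [rAct, ezd, negz, hYM]

theorem extY_inl_inl [AddCommGroup V] [Module 𝕜 V] (Y : V → V → ℤ → V) {YM : V → M → ℤ → M}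
    (d : M →ₗ[𝕜] M) (ψ : V → V → ℤ → M) (hYM : ∀ a n, YM a 0 n = 0) (a b : V) (n : ℤ) :
    extY 𝕜 Y YM d ψ (a, 0) (b, 0) n = (Y a b n, ψ a b n) := by
  simp [extY, hYM, rAct_zero_left d (hYM b)]

end ExtensionProduct

variable (𝕜 : Type*) [Field 𝕜] [CharZero 𝕜]
  {V M : Type*} [AddCommGroup V] [Module 𝕜 V] [AddCommGroup M] [Module 𝕜 M]
  (Y : V → V → ℤ → V) (one : V) (D : V →ₗ[𝕜] V)
  (YM : V → M → ℤ → M) (d : M →ₗ[𝕜] M)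

theorem cohomologous_of_equivalent_extensions
    (hM : IsVModule 𝕜 Y one D YM d)
    (ψ φ : V → V → ℤ → M)
    (h : (V × M) →ₗ[𝕜] (V × M))
    (hprod : ∀ (p q : V × M) (n : ℤ),
      h (extY 𝕜 Y YM d ψ p q n) = extY 𝕜 Y YM d φ (h p) (h q) n)
    (hvac : h ((one, 0) : V × M) = (one, 0))
    (hD : ∀ p : V × M, h (D.prodMap d p) = D.prodMap d (h p))
    (hp1 : ∀ p : V × M, (h p).1 = p.1)
    (hi2 : ∀ u : M, h ((0 : V), u) = ((0 : V), u)) :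
    ∃ g : V →ₗ[𝕜] M, (∀ a, g (D a) = d (g a)) ∧ g one = 0 ∧
      (∀ (a : V) (u : M), h (a, u) = (a, u + g a)) ∧
      (∀ a b n, ψ a b n = φ a b n + delta1 𝕜 Y YM d g a b n) := by
  have hh := apply_eq_add_offset h hp1 hi2
  have hYM0 : ∀ a n, YM a 0 n = 0 := fun a n => (hM.linear_right a n).map_zero
  refine ⟨offset h, fun a => ?_, ?_, hh, fun a b n => ?_⟩
  · simpa [offset] using congrArg Prod.snd (hD (a, 0))
  · simpa [offset] using congrArg Prod.snd hvac
  · have hab := congrArg Prod.snd (hprod (a, 0) (b, 0) n)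
    rw [extY_inl_inl Y d ψ hYM0, hh, hh, hh, zero_add, zero_add] at hab
    simp only [extY] at hab
    rw [delta1, eq_sub_of_add_eq hab]
    abel

end VertexCohomology
end
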